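/- There exists a constant C > 0, depending only on q, such that for all n ∈ ½ℤ₊ with n ≥ 1/2, all half-integers i ∈ {−n, …, n} and j ∈ {−n+1/2, …, n−1/2}, every entry of the 2×2 matrix b⁻_{nij} + q^{n+i} · diag((1−q^{2n+2j+1})^{1/2}, (1−q^{2n+2j−1})^{1/2}) has absolute value at most C·q^{2n}. -/

import Mathlib

noncomputable section

open Real

/-- The q-number `[m] = (q^m - q^(-m))/(q - q⁻¹)`. -/
def qnum (q m : ℝ) : ℝ := (q ^ m - q ^ (-m)) / (q - q⁻¹)

/-- The 2×2 matrix `a⁺_{nij}`. -/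
def aP (q n i j : ℝ) : Matrix (Fin 2) (Fin 2) ℝ :=
  (q ^ ((i + j - 1/2) / 2) * Real.sqrt (qnum q (n + i + 1))) •
    !![q ^ (-n - 1/2) * Real.sqrt (qnum q (n + j + 3/2)) / qnum q (2*n + 2), 0;
       q ^ ((1:ℝ)/2) * Real.sqrt (qnum q (n - j + 1/2)) / (qnum q (2*n + 1) * qnum q (2*n + 2)),
       q ^ (-n) * Real.sqrt (qnum q (n + j + 1/2)) / qnum q (2*n + 1)]

/-- The 2×2 matrix `a⁻_{nij}`. -/
def aM (q n i j : ℝ) : Matrix (Fin 2) (Fin 2) ℝ :=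
  (q ^ ((i + j - 1/2) / 2) * Real.sqrt (qnum q (n - i))) •
    !![q ^ (n + 1) * Real.sqrt (qnum q (n - j + 1/2)) / qnum q (2*n + 1),
       -(q ^ ((1:ℝ)/2) * Real.sqrt (qnum q (n + j + 1/2)) / (qnum q (2*n) * qnum q (2*n + 1)));
       0, q ^ (n + 1/2) * Real.sqrt (qnum q (n - j - 1/2)) / qnum q (2*n)]

/-- The 2×2 matrix `b⁺_{nij}`. -/
def bP (q n i j : ℝ) : Matrix (Fin 2) (Fin 2) ℝ :=
  (q ^ ((i + j - 1/2) / 2) * Real.sqrt (qnum q (n + i + 1))) •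
    !![Real.sqrt (qnum q (n - j + 3/2)) / qnum q (2*n + 2), 0;
       -(q ^ (-n - 1) * Real.sqrt (qnum q (n + j + 1/2)) / (qnum q (2*n + 1) * qnum q (2*n + 2))),
       q ^ (-(1:ℝ)/2) * Real.sqrt (qnum q (n - j + 1/2)) / qnum q (2*n + 1)]

/-- The 2×2 matrix `b⁻_{nij}`. -/
def bM (q n i j : ℝ) : Matrix (Fin 2) (Fin 2) ℝ :=
  (q ^ ((i + j - 1/2) / 2) * Real.sqrt (qnum q (n - i))) •
    !![-(q ^ (-(1:ℝ)/2) * Real.sqrt (qnum q (n + j + 1/2)) / qnum q (2*n + 1)),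
       -(q ^ n * Real.sqrt (qnum q (n - j + 1/2)) / (qnum q (2*n) * qnum q (2*n + 1)));
       0, -(Real.sqrt (qnum q (n + j - 1/2)) / qnum q (2*n))]

/-- `n` is a nonnegative half-integer: `n ∈ ½ℤ₊ = {0, 1/2, 1, 3/2, …}`. -/
def HalfNat (n : ℝ) : Prop := ∃ N : ℕ, (N : ℝ) = 2 * n

/-- `i ∈ {-n, -n+1, …, n}`. -/
def IdxRange (n i : ℝ) : Prop := (∃ k : ℕ, (k : ℝ) = i + n) ∧ i ≤ n

/-- `j ∈ {-n+1/2, -n+3/2, …, n-1/2}`. -/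
def JRangeIn (n j : ℝ) : Prop := (∃ k : ℕ, (k : ℝ) = j + n - 1/2) ∧ j ≤ n - 1/2

/-- `j ∈ {-n-1/2, -n+1/2, …, n+1/2}`. -/
def JRangeOut (n j : ℝ) : Prop := (∃ k : ℕ, (k : ℝ) = j + n + 1/2) ∧ j ≤ n + 1/2

/-! Writing `[m] = q^(1-m) (1 - q^(2m)) / (1 - q²)`, the powers of `q` in each entry of `b⁻_{nij}`
collapse to one monomial. The diagonal entries become `-q^(n+i) √(1-u) √(1-v) / (1-w)` with
`u = q^(2(n-i))` and `w = q^(4n+2)`, resp. `q^(4n)`, so adding `q^(n+i) √(1-v)` leaves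
`q^(n+i) √(1-v) (1 - √(1-u)/(1-w))`, and `|1 - √(1-u)/(1-w)| ≤ u + w/(1-q²)`; both `q^(n+i) u` and
`q^(n+i) w` are at most `q^(2n)` since `-n ≤ i ≤ n`. The `(0,1)` entry is of order
`q^(4n+i+j-1/2) ≤ q^(2n)`, and `1 - q^(4n) ≥ 1 - q²` because `n ≥ 1/2`. -/

lemma qnum_eq_rpow {q : ℝ} (hq0 : 0 < q) (hq1 : q ≠ 1) (m : ℝ) :
    qnum q m = q ^ (1 - m) * (1 - q ^ (2 * m)) / (1 - q ^ 2) := by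
  have hqm : q ^ (1 - m) = q / q ^ m := by rw [Real.rpow_sub hq0, Real.rpow_one]
  have h2m : q ^ (2 * m) = q ^ m * q ^ m := by rw [two_mul, Real.rpow_add hq0]
  have hq2 : 1 - q ^ 2 ≠ 0 := by
    intro h; apply hq1; nlinarith
  have hq' : q - q⁻¹ ≠ 0 := by
    intro h; apply hq1; field_simp at h; nlinarith
  have := Real.rpow_pos_of_pos hq0 m
  rw [qnum, Real.rpow_neg hq0.le, hqm, h2m, div_eq_div_iff hq' hq2]
  field_simp
  ring

lemma sqrt_qnum {q : ℝ} (hq0 : 0 < q) (hq1 : q < 1) (m : ℝ) :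
    √(qnum q m) = q ^ ((1 - m) / 2) * √(1 - q ^ (2 * m)) / √(1 - q ^ 2) := by
  rw [qnum_eq_rpow hq0 hq1.ne, Real.sqrt_div' _ (by nlinarith), Real.sqrt_mul (by positivity),
    Real.sqrt_eq_rpow (q ^ (1 - m)), ← Real.rpow_mul hq0.le]
  ring_nf

lemma one_sub_rpow_ne_zero {q : ℝ} (hq0 : 0 < q) (hq1 : q < 1) {d : ℝ} (hd : 0 < d) :
    1 - q ^ d ≠ 0 :=
  (sub_pos.2 (Real.rpow_lt_one hq0.le hq1 hd)).ne'

lemma one_sub_sq_le_one_sub_rpow {q : ℝ} (hq0 : 0 < q) (hq1 : q < 1) {d : ℝ} (hd : 2 ≤ d) :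
    1 - q ^ 2 ≤ 1 - q ^ d := by
  have := Real.rpow_le_rpow_of_exponent_ge hq0 hq1.le hd
  rw [Real.rpow_two] at this
  linarith

lemma bM_apply_zero_zero {q : ℝ} (hq0 : 0 < q) (hq1 : q < 1) (n i j : ℝ) (hn : 0 ≤ n) :
    bM q n i j 0 0 = -(q ^ (n + i) * (√(1 - q ^ (2 * (n - i))) * √(1 - q ^ (2 * n + 2 * j + 1)))
      / (1 - q ^ (2 * (2 * n + 1)))) := by
  have hc : 0 < 1 - q ^ 2 := by nlinarith
  have hexp : q ^ (n + i) = q ^ ((i + j - 1 / 2) / 2) * q ^ ((1 - (n - i)) / 2) * q ^ (-1 / 2 : ℝ)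
      * q ^ ((1 - (n + j + 1 / 2)) / 2) / q ^ (1 - (2 * n + 1)) := by
    rw [← Real.rpow_add hq0, ← Real.rpow_add hq0, ← Real.rpow_add hq0, ← Real.rpow_sub hq0]
    ring_nf
  have := one_sub_rpow_ne_zero hq0 hq1 (by linarith : (0:ℝ) < 2 * (2 * n + 1))
  have := Real.sqrt_pos.2 hc
  have := Real.rpow_pos_of_pos hq0 (1 - (2 * n + 1))
  simp only [bM, Matrix.smul_apply, Matrix.of_apply, Matrix.cons_val', Matrix.cons_val_zero,
    Matrix.empty_val', Matrix.cons_val_fin_one, smul_eq_mul]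
  rw [sqrt_qnum hq0 hq1, sqrt_qnum hq0 hq1, qnum_eq_rpow hq0 hq1.ne, hexp,
    show 2 * (n + j + 1 / 2) = 2 * n + 2 * j + 1 by ring]
  field_simp
  rw [Real.sq_sqrt hc.le]

lemma bM_apply_zero_one {q : ℝ} (hq0 : 0 < q) (hq1 : q < 1) (n i j : ℝ) (hn : 0 < n) :
    bM q n i j 0 1 = -(q ^ (4 * n + i + j - 1 / 2) * (1 - q ^ 2) *
      (√(1 - q ^ (2 * (n - i))) * √(1 - q ^ (2 * (n - j + 1 / 2))))
      / ((1 - q ^ (2 * (2 * n))) * (1 - q ^ (2 * (2 * n + 1))))) := by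
  have hc : 0 < 1 - q ^ 2 := by nlinarith
  have hexp : q ^ (4 * n + i + j - 1 / 2) = q ^ ((i + j - 1 / 2) / 2) * q ^ ((1 - (n - i)) / 2)
      * q ^ n * q ^ ((1 - (n - j + 1 / 2)) / 2) / q ^ (1 - 2 * n) / q ^ (1 - (2 * n + 1)) := by
    rw [← Real.rpow_add hq0, ← Real.rpow_add hq0, ← Real.rpow_add hq0, ← Real.rpow_sub hq0,
      ← Real.rpow_sub hq0]
    ring_nf
  have := one_sub_rpow_ne_zero hq0 hq1 (by linarith : (0:ℝ) < 2 * (2 * n))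
  have := one_sub_rpow_ne_zero hq0 hq1 (by linarith : (0:ℝ) < 2 * (2 * n + 1))
  have := Real.sqrt_pos.2 hc
  have := Real.rpow_pos_of_pos hq0 (1 - 2 * n)
  have := Real.rpow_pos_of_pos hq0 (1 - (2 * n + 1))
  simp only [bM, Matrix.smul_apply, Matrix.of_apply, Matrix.cons_val', Matrix.cons_val_zero,
    Matrix.cons_val_one, Matrix.empty_val', Matrix.cons_val_fin_one, smul_eq_mul]
  rw [sqrt_qnum hq0 hq1, sqrt_qnum hq0 hq1, qnum_eq_rpow hq0 hq1.ne, qnum_eq_rpow hq0 hq1.ne, hexp]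
  field_simp
  rw [Real.sq_sqrt hc.le]

lemma bM_apply_one_one {q : ℝ} (hq0 : 0 < q) (hq1 : q < 1) (n i j : ℝ) (hn : 0 < n) :
    bM q n i j 1 1 = -(q ^ (n + i) * (√(1 - q ^ (2 * (n - i))) * √(1 - q ^ (2 * n + 2 * j - 1)))
      / (1 - q ^ (2 * (2 * n)))) := by
  have hc : 0 < 1 - q ^ 2 := by nlinarith
  have hexp : q ^ (n + i) = q ^ ((i + j - 1 / 2) / 2) * q ^ ((1 - (n - i)) / 2)
      * q ^ ((1 - (n + j - 1 / 2)) / 2) / q ^ (1 - 2 * n) := by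
    rw [← Real.rpow_add hq0, ← Real.rpow_add hq0, ← Real.rpow_sub hq0]
    ring_nf
  have := one_sub_rpow_ne_zero hq0 hq1 (by linarith : (0:ℝ) < 2 * (2 * n))
  have := Real.sqrt_pos.2 hc
  have := Real.rpow_pos_of_pos hq0 (1 - 2 * n)
  simp only [bM, Matrix.smul_apply, Matrix.of_apply, Matrix.cons_val', Matrix.cons_val_one,
    Matrix.empty_val', Matrix.cons_val_fin_one, smul_eq_mul]
  rw [sqrt_qnum hq0 hq1, sqrt_qnum hq0 hq1, qnum_eq_rpow hq0 hq1.ne, hexp,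
    show 2 * (n + j - 1 / 2) = 2 * n + 2 * j - 1 by ring]
  field_simp
  rw [Real.sq_sqrt hc.le]

lemma abs_one_sub_sqrt_one_sub_div_le {u w c : ℝ} (hu0 : 0 ≤ u) (hu1 : u ≤ 1) (hw0 : 0 ≤ w)
    (hw : w ≤ 1 - c) (hc : 0 < c) : |1 - √(1 - u) / (1 - w)| ≤ u + w / c := by
  have hcw : c ≤ 1 - w := by linarith
  have hw1 : 0 < 1 - w := hc.trans_le hcw
  have hs0 := Real.sqrt_nonneg (1 - u)
  have hs1 : √(1 - u) ≤ 1 := Real.sqrt_le_one.2 (by linarith)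
  have hs : 1 - u ≤ √(1 - u) := by
    nlinarith [Real.sq_sqrt (by linarith : (0:ℝ) ≤ 1 - u)]
  have hinv : 1 / (1 - w) ≤ 1 + w / c := by
    have : w ≤ w * (1 - w) / c := by rw [le_div_iff₀ hc]; nlinarith
    rw [div_le_iff₀ hw1, add_mul, one_mul, div_mul_eq_mul_div]
    linarith
  have hwc : 0 ≤ w / c := div_nonneg hw0 hc.le
  rw [abs_le]
  constructor
  · have : √(1 - u) / (1 - w) ≤ 1 / (1 - w) := by gcongr
    linarith
  · have : √(1 - u) ≤ √(1 - u) / (1 - w) := by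
      rw [le_div_iff₀ hw1]; nlinarith
    linarith

lemma abs_diag_entry_le {q : ℝ} (hq0 : 0 < q) (hq1 : q < 1) {n i d s : ℝ} (hi : -n ≤ i)
    (hi' : i ≤ n) (hd : 2 ≤ d) (hnd : 2 * n ≤ d) (hs0 : 0 ≤ s) (hs1 : s ≤ 1) :
    |-(q ^ (n + i) * (√(1 - q ^ (2 * (n - i))) * s) / (1 - q ^ d)) + q ^ (n + i) * s|
      ≤ (1 + 1 / (1 - q ^ 2)) * q ^ (2 * n) := by
  have hc : 0 < 1 - q ^ 2 := by nlinarith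
  have hx := Real.rpow_pos_of_pos hq0 (n + i)
  have hdist := abs_one_sub_sqrt_one_sub_div_le (Real.rpow_nonneg hq0.le (2 * (n - i)))
    (Real.rpow_le_one hq0.le hq1.le (by linarith)) (Real.rpow_nonneg hq0.le d)
    (by linarith [one_sub_sq_le_one_sub_rpow hq0 hq1 hd]) hc
  have hu : q ^ (n + i) * q ^ (2 * (n - i)) ≤ q ^ (2 * n) := by
    rw [← Real.rpow_add hq0]
    exact Real.rpow_le_rpow_of_exponent_ge hq0 hq1.le (by linarith)
  have hw : q ^ (n + i) * q ^ d ≤ q ^ (2 * n) := by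
    rw [← Real.rpow_add hq0]
    exact Real.rpow_le_rpow_of_exponent_ge hq0 hq1.le (by linarith)
  calc |-(q ^ (n + i) * (√(1 - q ^ (2 * (n - i))) * s) / (1 - q ^ d)) + q ^ (n + i) * s|
      = |q ^ (n + i) * s * (1 - √(1 - q ^ (2 * (n - i))) / (1 - q ^ d))| := by ring_nf
    _ = q ^ (n + i) * s * |1 - √(1 - q ^ (2 * (n - i))) / (1 - q ^ d)| := by
        rw [abs_mul, abs_of_nonneg (by positivity)]
    _ ≤ q ^ (n + i) * 1 * (q ^ (2 * (n - i)) + q ^ d / (1 - q ^ 2)) := by gcongr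
    _ = q ^ (n + i) * q ^ (2 * (n - i)) + q ^ (n + i) * q ^ d / (1 - q ^ 2) := by ring
    _ ≤ q ^ (2 * n) + q ^ (2 * n) / (1 - q ^ 2) := by gcongr
    _ = (1 + 1 / (1 - q ^ 2)) * q ^ (2 * n) := by ring

lemma abs_off_diag_entry_le {q : ℝ} (hq0 : 0 < q) (hq1 : q < 1) {n e d d' s t : ℝ}
    (he : 2 * n ≤ e) (hd : 2 ≤ d) (hd' : 2 ≤ d') (hs0 : 0 ≤ s) (hs1 : s ≤ 1) (ht0 : 0 ≤ t)
    (ht1 : t ≤ 1) :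
    |-(q ^ e * (1 - q ^ 2) * (s * t) / ((1 - q ^ d) * (1 - q ^ d')))|
      ≤ (1 + 1 / (1 - q ^ 2)) * q ^ (2 * n) := by
  have hc : 0 < 1 - q ^ 2 := by nlinarith
  have hcd := one_sub_sq_le_one_sub_rpow hq0 hq1 hd
  have hcd' := one_sub_sq_le_one_sub_rpow hq0 hq1 hd'
  have hqe : q ^ e ≤ q ^ (2 * n) := Real.rpow_le_rpow_of_exponent_ge hq0 hq1.le he
  have hq2n := Real.rpow_pos_of_pos hq0 (2 * n)
  have hqe0 := Real.rpow_nonneg hq0.le e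
  rw [abs_neg, abs_of_nonneg (div_nonneg (by positivity) (by nlinarith))]
  calc q ^ e * (1 - q ^ 2) * (s * t) / ((1 - q ^ d) * (1 - q ^ d'))
      ≤ q ^ (2 * n) * (1 - q ^ 2) * (1 * 1) / ((1 - q ^ 2) * (1 - q ^ 2)) := by
        gcongr
        linarith
    _ = q ^ (2 * n) / (1 - q ^ 2) := by field_simp
    _ ≤ (1 + 1 / (1 - q ^ 2)) * q ^ (2 * n) := by
        rw [add_mul, one_mul, one_div_mul_eq_div]
        linarith

/-- There is `C > 0` depending only on `q` such that for all `n ∈ ½ℤ₊` with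
`n ≥ 1/2`, `i ∈ {-n,…,n}`, `j ∈ {-n+1/2,…,n-1/2}`, every entry of
`b⁻_{nij} + q^(n+i) diag((1-q^(2n+2j+1))^(1/2), (1-q^(2n+2j-1))^(1/2))`
has absolute value at most `C·q^(2n)`. -/
theorem bMinus_asymptotics' (q : ℝ) (hq0 : 0 < q) (hq1 : q < 1) :
    ∃ C : ℝ, 0 < C ∧ ∀ n i j : ℝ, HalfNat n → 1/2 ≤ n → IdxRange n i → JRangeIn n j →
      ∀ r s : Fin 2,
        |(bM q n i j + (q ^ (n + i)) •
            !![Real.sqrt (1 - q ^ (2*n + 2*j + 1)), 0;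
               0, Real.sqrt (1 - q ^ (2*n + 2*j - 1))]) r s|
          ≤ C * q ^ (2 * n) := by
  have hc : 0 < 1 - q ^ 2 := by nlinarith
  refine ⟨1 + 1 / (1 - q ^ 2), by positivity, ?_⟩
  rintro n i j - hn ⟨⟨k, hk⟩, hin⟩ ⟨⟨l, hl⟩, hjn⟩ r s
  have hni : -n ≤ i := by linarith [k.cast_nonneg (α := ℝ)]
  have hnj : -n + 1 / 2 ≤ j := by linarith [l.cast_nonneg (α := ℝ)]
  have hsqrt_le_one (x : ℝ) : √(1 - q ^ x) ≤ 1 :=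
    Real.sqrt_le_one.2 (by linarith [Real.rpow_nonneg hq0.le x])
  fin_cases r <;> fin_cases s <;>
    simp only [Fin.zero_eta, Fin.mk_one, Matrix.add_apply, Matrix.smul_apply, Matrix.of_apply,
      Matrix.cons_val', Matrix.cons_val_zero, Matrix.cons_val_one, Matrix.empty_val',
      Matrix.cons_val_fin_one, smul_eq_mul, mul_zero, add_zero]
  · rw [bM_apply_zero_zero hq0 hq1 n i j (by linarith)]
    exact abs_diag_entry_le hq0 hq1 hni hin (by linarith) (by linarith) (Real.sqrt_nonneg _)
      (hsqrt_le_one _)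
  · rw [bM_apply_zero_one hq0 hq1 n i j (by linarith)]
    exact abs_off_diag_entry_le hq0 hq1 (by linarith) (by linarith) (by linarith)
      (Real.sqrt_nonneg _) (hsqrt_le_one _) (Real.sqrt_nonneg _) (hsqrt_le_one _)
  · simp only [bM, Matrix.smul_apply, Matrix.of_apply, Matrix.cons_val', Matrix.cons_val_zero,
      Matrix.cons_val_one, Matrix.empty_val', Matrix.cons_val_fin_one, smul_eq_mul, mul_zero,
      abs_zero]
    positivity
  · rw [bM_apply_one_one hq0 hq1 n i j (by linarith)]
    exact abs_diag_entry_le hq0 hq1 hni hin (by linarith) (by linarith) (Real.sqrt_nonneg _)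
      (hsqrt_le_one _)
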